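/- arXiv:2303.06533 — 4 statements merged into one kernel-verified Lean document; each statement's English description precedes it below -/
import Mathlib

section
/- If a probability measure μ on a metric space (E,d) satisfies the T₁(C) inequality W₁(μ,ν) ≤ √(2C·H(ν|μ)) for all ν, then μ has normal concentration: for every Borel set A with μ(A) ≥ 1/2 and every ε > √(2C log 2), one has μ(A_ε) ≥ 1 − exp(−(ε − √(2C log 2))²/(2C)), where A_ε is the open ε-neighborhood of A. -/
/-!
Marton's argument. Let `B` be the complement of `A_ε`. The function `min (d(·, A)) ε` is
1-Lipschitz, vanishes on `A` and equals `ε` on `B`, so integrating it against a coupling gives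
`ε ≤ W₁(μ, μ(·|A)) + W₁(μ, μ(·|B))`. Since `H(μ(·|S) | μ) = log (1 / μ S)`, the `T₁(C)` inequality
bounds the right-hand side by `√(2C log (1/μ A)) + √(2C log (1/μ B))`, and the first term is at
most `√(2C log 2)`; solving for `μ B` gives the Gaussian tail.
-/

open MeasureTheory ENNReal
open scoped Classical

/-- The set of couplings of `μ` and `ν`. -/
def IsCoupling {E : Type*} [MeasurableSpace E] (π : Measure (E × E)) (μ ν : Measure E) : Prop :=
  π.map Prod.fst = μ ∧ π.map Prod.snd = ν

/-- The Wasserstein distance of order `p` between two measures on a metric space. -/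
noncomputable def wassersteinDist {E : Type*} [MetricSpace E] [MeasurableSpace E]
    (p : ℝ) (μ ν : Measure E) : ℝ≥0∞ :=
  ⨅ (π : Measure (E × E)) (_ : IsCoupling π μ ν),
    (∫⁻ z, (edist z.1 z.2) ^ p ∂π) ^ (1 / p)

/-- The relative entropy (Kullback information) of `ν` with respect to `μ`. -/
noncomputable def relEntropy {E : Type*} [MeasurableSpace E] (ν μ : Measure E) : ℝ≥0∞ :=
  if ν ≪ μ then ENNReal.ofReal (∫ x, Real.log ((ν.rnDeriv μ x).toReal) ∂ν) else ⊤

open ProbabilityTheory Metric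

lemma IsCoupling.swap {E : Type*} [MeasurableSpace E] {π : Measure (E × E)} {μ ν : Measure E}
    (hπ : IsCoupling π μ ν) : IsCoupling (π.map Prod.swap) ν μ := by
  constructor
  · rw [Measure.map_map measurable_fst measurable_swap]
    exact hπ.2
  · rw [Measure.map_map measurable_snd measurable_swap]
    exact hπ.1

section Wasserstein

variable {E : Type*} [MetricSpace E] [MeasurableSpace E]

lemma wassersteinDist_le_swap (p : ℝ) (μ ν : Measure E) :
    wassersteinDist p μ ν ≤ wassersteinDist p ν μ := by
  refine le_iInf₂ fun π hπ => iInf₂_le_of_le _ hπ.swap (le_of_eq ?_)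
  congr 1
  exact (lintegral_map_equiv _ MeasurableEquiv.prodComm).trans
    (lintegral_congr fun z => by rw [edist_comm]; rfl)

lemma wassersteinDist_comm (p : ℝ) (μ ν : Measure E) :
    wassersteinDist p μ ν = wassersteinDist p ν μ :=
  le_antisymm (wassersteinDist_le_swap p μ ν) (wassersteinDist_le_swap p ν μ)

lemma lintegral_le_lintegral_add_wassersteinDist_one {g : E → ℝ≥0∞} (hg : Measurable g)
    (hg_lip : ∀ x y, g x ≤ g y + edist x y) (μ ν : Measure E) :
    ∫⁻ x, g x ∂μ ≤ ∫⁻ x, g x ∂ν + wassersteinDist 1 μ ν := by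
  rw [← tsub_le_iff_left, wassersteinDist]
  refine le_iInf₂ fun π hπ => tsub_le_iff_left.2 ?_
  calc ∫⁻ x, g x ∂μ = ∫⁻ z, g z.1 ∂π := by rw [← hπ.1, lintegral_map hg measurable_fst]
    _ ≤ ∫⁻ z, g z.2 + edist z.1 z.2 ∂π := lintegral_mono fun z => hg_lip z.1 z.2
    _ = ∫⁻ x, g x ∂ν + ∫⁻ z, edist z.1 z.2 ∂π := by
      rw [lintegral_add_left (by fun_prop : Measurable fun z : E × E => g z.2), ← hπ.2,
        lintegral_map hg measurable_snd]
    _ = _ := by simp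

lemma ofReal_le_wassersteinDist_add_wassersteinDist [OpensMeasurableSpace E] {A : Set E} {ε : ℝ}
    (μ ν₁ ν₂ : Measure E) [IsProbabilityMeasure ν₂] (h₁ : ∀ᵐ x ∂ν₁, x ∈ A)
    (h₂ : ∀ᵐ x ∂ν₂, x ∉ thickening ε A) :
    ENNReal.ofReal ε ≤ wassersteinDist 1 μ ν₁ + wassersteinDist 1 μ ν₂ := by
  set g : E → ℝ≥0∞ := fun x => min (infEDist x A) (ENNReal.ofReal ε)
  have hg : Measurable g := (continuous_infEDist.min continuous_const).measurable
  have hg_lip (x y : E) : g x ≤ g y + edist x y :=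
    (min_le_min infEDist_le_infEDist_add_edist le_self_add).trans_eq (min_add_add_right _ _ _)
  have hg₁ : ∫⁻ x, g x ∂ν₁ = 0 := by
    rw [lintegral_congr_ae (g := 0) (h₁.mono fun x hx => by simp [g, infEDist_zero_of_mem hx])]
    simp
  have hg₂ : ∫⁻ x, g x ∂ν₂ = ENNReal.ofReal ε := by
    rw [lintegral_congr_ae (g := fun _ => ENNReal.ofReal ε) (h₂.mono fun x hx =>
      min_eq_right (not_lt.1 (hx ∘ mem_thickening_iff_infEDist_lt.2)))]
    simp
  calc ENNReal.ofReal ε = ∫⁻ x, g x ∂ν₂ := hg₂.symm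
    _ ≤ ∫⁻ x, g x ∂μ + wassersteinDist 1 ν₂ μ :=
      lintegral_le_lintegral_add_wassersteinDist_one hg hg_lip ν₂ μ
    _ ≤ ∫⁻ x, g x ∂ν₁ + wassersteinDist 1 μ ν₁ + wassersteinDist 1 ν₂ μ := by
      gcongr
      exact lintegral_le_lintegral_add_wassersteinDist_one hg hg_lip μ ν₁
    _ = wassersteinDist 1 μ ν₁ + wassersteinDist 1 μ ν₂ := by
      rw [hg₁, zero_add, wassersteinDist_comm 1 ν₂]

end Wasserstein

lemma relEntropy_cond {E : Type*} [MeasurableSpace E] (μ : Measure E) [IsFiniteMeasure μ]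
    {S : Set E} (hS : MeasurableSet S) (hS₀ : μ S ≠ 0) :
    relEntropy μ[|S] μ = ENNReal.ofReal (Real.log (μ.real S)⁻¹) := by
  have := cond_isProbabilityMeasure (s := S) hS₀
  have hrn : (μ[|S]).rnDeriv μ =ᵐ[μ] (μ S)⁻¹ • S.indicator 1 := by
    filter_upwards [Measure.rnDeriv_smul_left_of_ne_top (μ.restrict S) μ
      (ENNReal.inv_ne_top.2 hS₀), Measure.rnDeriv_restrict_self μ hS] with x hx hx'
    rw [ProbabilityTheory.cond, hx, Pi.smul_apply, hx', Pi.smul_apply]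
  have hlog : ∀ᵐ x ∂μ[|S], Real.log ((μ[|S]).rnDeriv μ x).toReal = Real.log (μ.real S)⁻¹ := by
    filter_upwards [cond_absolutelyContinuous.ae_le hrn, ae_cond_mem hS] with x hx hxS
    simp [hx, hxS, measureReal_def]
  rw [relEntropy, if_pos cond_absolutelyContinuous, integral_congr_ae hlog, integral_const,
    probReal_univ, one_smul]

lemma le_exp_neg_sq_div_of_le_sqrt_log_inv {C b t : ℝ} (hC : 0 < C) (hb : 0 < b) (ht : 0 < t)
    (h : t ≤ √(2 * C * Real.log b⁻¹)) : b ≤ Real.exp (-t ^ 2 / (2 * C)) := by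
  rw [Real.le_sqrt' ht, Real.log_inv] at h
  rw [← Real.log_le_iff_le_exp hb, le_div_iff₀ (by positivity)]
  linarith

section T1

variable {E : Type*} [MetricSpace E] [MeasurableSpace E]

def SatisfiesT1 (μ : Measure E) (C : ℝ) : Prop :=
  ∀ ν : Measure E, IsProbabilityMeasure ν →
    wassersteinDist 1 μ ν ≤ (ENNReal.ofReal (2 * C) * relEntropy ν μ) ^ (1 / 2 : ℝ)

lemma SatisfiesT1.wassersteinDist_cond_le {μ : Measure E} [IsProbabilityMeasure μ] {C : ℝ}
    (hμ : SatisfiesT1 μ C) (hC : 0 ≤ C) {S : Set E} (hS : MeasurableSet S) (hS₀ : μ S ≠ 0) :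
    wassersteinDist 1 μ μ[|S] ≤ ENNReal.ofReal √(2 * C * Real.log (μ.real S)⁻¹) := by
  have hlog : 0 ≤ Real.log (μ.real S)⁻¹ :=
    Real.log_nonneg <|
      (one_le_inv₀ (ENNReal.toReal_pos hS₀ (measure_ne_top μ S))).2 measureReal_le_one
  refine (hμ _ (cond_isProbabilityMeasure hS₀)).trans_eq ?_
  rw [relEntropy_cond μ hS hS₀, ← ENNReal.ofReal_mul (by positivity),
    ENNReal.ofReal_rpow_of_nonneg (by positivity) (by norm_num), Real.sqrt_eq_rpow]

lemma SatisfiesT1.measureReal_compl_thickening_le [OpensMeasurableSpace E] {μ : Measure E}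
    [IsProbabilityMeasure μ] {C : ℝ}
    (hμ : SatisfiesT1 μ C) (hC : 0 < C) {A : Set E} (hA : MeasurableSet A) (hA_half : 1 / 2 ≤ μ A)
    {ε : ℝ} (hε : √(2 * C * Real.log 2) < ε) :
    μ.real (thickening ε A)ᶜ ≤ Real.exp (-(ε - √(2 * C * Real.log 2)) ^ 2 / (2 * C)) := by
  set B := (thickening ε A)ᶜ
  have hB : MeasurableSet B := isOpen_thickening.measurableSet.compl
  rcases eq_or_ne (μ B) 0 with hB₀ | hB₀
  · simp only [measureReal_def, hB₀, ENNReal.toReal_zero]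
    positivity
  have hA₀ : μ A ≠ 0 := (lt_of_lt_of_le (by norm_num) hA_half).ne'
  have := cond_isProbabilityMeasure hB₀
  have hsep := ofReal_le_wassersteinDist_add_wassersteinDist μ μ[|A] μ[|B] (ae_cond_mem hA)
    (ae_cond_mem hB)
  have hsum : ε ≤ √(2 * C * Real.log (μ.real A)⁻¹) + √(2 * C * Real.log (μ.real B)⁻¹) := by
    have h := hsep.trans (add_le_add (hμ.wassersteinDist_cond_le hC.le hA hA₀)
      (hμ.wassersteinDist_cond_le hC.le hB hB₀))
    rwa [← ENNReal.ofReal_add (by positivity) (by positivity),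
      ENNReal.ofReal_le_ofReal_iff (by positivity)] at h
  have hA_sqrt : √(2 * C * Real.log (μ.real A)⁻¹) ≤ √(2 * C * Real.log 2) := by
    have hA_real : 1 / 2 ≤ μ.real A := by
      simpa [measureReal_def] using ENNReal.toReal_mono (measure_ne_top μ A) hA_half
    gcongr
    rw [inv_le_comm₀ (by linarith) two_pos]
    linarith
  exact le_exp_neg_sq_div_of_le_sqrt_log_inv hC (ENNReal.toReal_pos hB₀ (measure_ne_top μ B))
    (sub_pos.2 hε) (by linarith)

end T1

/-- `T₁(C)` implies normal (Gaussian) concentration: if `μ(A) ≥ 1/2` and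
`ε > √(2C log 2)`, then `μ(A_ε) ≥ 1 − exp(−(ε − √(2C log 2))²/(2C))`, where `A_ε` is the
open `ε`-neighborhood of `A`. -/
theorem t1_implies_concentration {E : Type*} [MetricSpace E] [MeasurableSpace E] [BorelSpace E]
    (μ : Measure E) [IsProbabilityMeasure μ] (C : ℝ) (hC : 0 < C)
    (hT1 : ∀ ν : Measure E, IsProbabilityMeasure ν →
      wassersteinDist 1 μ ν ≤ (ENNReal.ofReal (2 * C) * relEntropy ν μ) ^ (1 / 2 : ℝ)) :
    ∀ A : Set E, MeasurableSet A → (1 / 2 : ℝ≥0∞) ≤ μ A →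
      ∀ ε : ℝ, Real.sqrt (2 * C * Real.log 2) < ε →
        ENNReal.ofReal (1 - Real.exp (-(ε - Real.sqrt (2 * C * Real.log 2)) ^ 2 / (2 * C)))
          ≤ μ (Metric.thickening ε A) := by
  intro A hA hA_half ε hε
  have h := SatisfiesT1.measureReal_compl_thickening_le hT1 hC hA hA_half hε
  rw [measureReal_compl isOpen_thickening.measurableSet, probReal_univ] at h
  rw [← ofReal_measureReal]
  exact ENNReal.ofReal_le_ofReal (by linarith)
end

section
/- If a probability measure μ on a metric space (E,d) satisfies the Gaussian concentration bound ∫ e^{f − μ(f)} dμ ≤ e^{D‖f‖²_Lip} for all Lipschitz f (with constant D > 0), then there exists x₀ ∈ E such that ∫ exp(d(x₀,x)²/(16D)) dμ(x) ≤ 3·exp(μ(d)²/D), where μ(d) = ∫ d(x,x₀) dμ(x). -/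
/-!
For `λ ≥ 0` the function `λ · d(x₀, ·)` is `λ`-Lipschitz, so concentration gives the
moment-generating bound `∫ e^{λ d(x₀,x)} dμ ≤ e^{λ μ(d) + D λ²}`. Averaging `e^{λ t}` against the
Gaussian weight `e^{-4Dλ²}` produces `√(π/(4D)) · e^{t²/(16D)}`; after exchanging the two
integrals, the inner one is bounded by the moment-generating bound for `λ ≥ 0` and by `1` for
`λ < 0`, and the two resulting Gaussian integrals account for the constant `3`.
-/

open MeasureTheory ENNReal
open scoped Classical NNReal

/-- The Lipschitz seminorm `‖f‖_Lip = sup_{x ≠ y} |f x − f y| / d(x,y)`. -/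
noncomputable def lipNorm {E : Type*} [MetricSpace E] (f : E → ℝ) : ℝ :=
  ⨆ p : {p : E × E // p.1 ≠ p.2}, |f (p : E × E).1 - f (p : E × E).2| / dist (p : E × E).1 (p : E × E).2

open Real

lemma lipNorm_nonneg {E : Type*} [MetricSpace E] (f : E → ℝ) : 0 ≤ lipNorm f :=
  Real.iSup_nonneg fun _ => div_nonneg (abs_nonneg _) dist_nonneg

lemma LipschitzWith.lipNorm_le {E : Type*} [MetricSpace E] {f : E → ℝ} {K : ℝ≥0}
    (hf : LipschitzWith K f) : lipNorm f ≤ K :=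
  Real.iSup_le (fun ⟨(x, y), hxy⟩ => (div_le_iff₀ (dist_pos.2 hxy)).2 (hf.dist_le_mul x y))
    K.coe_nonneg

lemma ofReal_exp_mul_ofReal_exp (a b : ℝ) :
    ENNReal.ofReal (exp a) * ENNReal.ofReal (exp b) = ENNReal.ofReal (exp (a + b)) := by
  rw [← ENNReal.ofReal_mul (exp_nonneg a), exp_add]

lemma LipschitzWith.lintegral_exp_le_of_concentration {Ω : Type*} [MetricSpace Ω]
    [MeasurableSpace Ω] {μ : Measure Ω} {D : ℝ} (hD : 0 ≤ D) {f : Ω → ℝ} {K : ℝ≥0}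
    (hf : LipschitzWith K f)
    (hconc : ∫⁻ x, ENNReal.ofReal (exp (f x - ∫ y, f y ∂μ)) ∂μ
      ≤ ENNReal.ofReal (exp (D * lipNorm f ^ 2))) :
    ∫⁻ x, ENNReal.ofReal (exp (f x)) ∂μ ≤ ENNReal.ofReal (exp ((∫ y, f y ∂μ) + D * K ^ 2)) := by
  have hD_lip : D * lipNorm f ^ 2 ≤ D * K ^ 2 := by
    gcongr
    exacts [lipNorm_nonneg f, hf.lipNorm_le]
  calc ∫⁻ x, ENNReal.ofReal (exp (f x)) ∂μ
      = (∫⁻ x, ENNReal.ofReal (exp (f x - ∫ y, f y ∂μ)) ∂μ)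
          * ENNReal.ofReal (exp (∫ y, f y ∂μ)) := by
        rw [← lintegral_mul_const' _ _ ofReal_ne_top]
        simp only [ofReal_exp_mul_ofReal_exp, sub_add_cancel]
    _ ≤ ENNReal.ofReal (exp (D * lipNorm f ^ 2)) * ENNReal.ofReal (exp (∫ y, f y ∂μ)) := by
        gcongr
    _ ≤ ENNReal.ofReal (exp ((∫ y, f y ∂μ) + D * K ^ 2)) := by
        rw [ofReal_exp_mul_ofReal_exp, add_comm]
        gcongr

section GaussianIntegral

variable (a : ℝ) {b : ℝ}

lemma exp_mul_sub_mul_sq_eq (hb : b ≠ 0) (l : ℝ) :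
    exp (a * l - b * l ^ 2) = exp (a ^ 2 / (4 * b)) * exp (-b * (l - a / (2 * b)) ^ 2) := by
  rw [← exp_add]
  congr 1
  field_simp
  ring

lemma integrable_exp_mul_sub_mul_sq (hb : 0 < b) :
    Integrable fun l : ℝ => exp (a * l - b * l ^ 2) := by
  simp_rw [exp_mul_sub_mul_sq_eq a hb.ne']
  exact ((integrable_exp_neg_mul_sq hb).comp_sub_right _).const_mul _

lemma lintegral_exp_mul_sub_mul_sq (hb : 0 < b) :
    ∫⁻ l : ℝ, ENNReal.ofReal (exp (a * l - b * l ^ 2))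
      = ENNReal.ofReal (exp (a ^ 2 / (4 * b)) * √(π / b)) := by
  rw [← ofReal_integral_eq_lintegral_ofReal (integrable_exp_mul_sub_mul_sq a hb)
    (.of_forall fun _ => (exp_pos _).le)]
  simp_rw [exp_mul_sub_mul_sq_eq a hb.ne']
  rw [integral_const_mul, integral_sub_right_eq_self (fun l => exp (-b * l ^ 2)),
    integral_gaussian]

lemma sqrt_pi_div_three_mul_le {D : ℝ} (hD : 0 < D) : √(π / (3 * D)) ≤ 2 * √(π / (4 * D)) := by
  have h4 : √(4 : ℝ) = 2 := by
    rw [show (4 : ℝ) = 2 ^ 2 by norm_num, sqrt_sq zero_le_two]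
  rw [← h4, ← sqrt_mul zero_le_four, mul_div_assoc', mul_div_mul_left π D four_ne_zero]
  gcongr
  linarith

end GaussianIntegral

section MomentGeneratingFunction

variable {Ω : Type*} [MeasurableSpace Ω] {μ : Measure Ω} {g : Ω → ℝ} {m D : ℝ}

lemma lintegral_exp_mul_sub_mul_sq_le_of_mgf_le [IsProbabilityMeasure μ] (hg : 0 ≤ g)
    (hmgf : ∀ l : ℝ, 0 ≤ l →
      ∫⁻ x, ENNReal.ofReal (exp (l * g x)) ∂μ ≤ ENNReal.ofReal (exp (l * m + D * l ^ 2)))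
    (l : ℝ) :
    ∫⁻ x, ENNReal.ofReal (exp (g x * l - 4 * D * l ^ 2)) ∂μ
      ≤ ENNReal.ofReal (exp (0 * l - 4 * D * l ^ 2))
        + ENNReal.ofReal (exp (m * l - 3 * D * l ^ 2)) := by
  rcases le_or_gt 0 l with hl | hl
  · calc ∫⁻ x, ENNReal.ofReal (exp (g x * l - 4 * D * l ^ 2)) ∂μ
        = (∫⁻ x, ENNReal.ofReal (exp (l * g x)) ∂μ) * ENNReal.ofReal (exp (-(4 * D * l ^ 2))) := by
          rw [← lintegral_mul_const' _ _ ofReal_ne_top]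
          refine lintegral_congr fun x => ?_
          rw [ofReal_exp_mul_ofReal_exp]
          ring_nf
      _ ≤ ENNReal.ofReal (exp (l * m + D * l ^ 2)) * ENNReal.ofReal (exp (-(4 * D * l ^ 2))) := by
          gcongr
          exact hmgf l hl
      _ = ENNReal.ofReal (exp (m * l - 3 * D * l ^ 2)) := by
          rw [ofReal_exp_mul_ofReal_exp]
          ring_nf
      _ ≤ _ := le_add_self
  · calc ∫⁻ x, ENNReal.ofReal (exp (g x * l - 4 * D * l ^ 2)) ∂μ
        ≤ ∫⁻ _, ENNReal.ofReal (exp (0 * l - 4 * D * l ^ 2)) ∂μ := by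
          refine lintegral_mono fun x => ?_
          gcongr ENNReal.ofReal (exp (?_ - _))
          exact mul_nonpos_of_nonneg_of_nonpos (hg x) hl.le |>.trans (zero_mul l).ge
      _ = ENNReal.ofReal (exp (0 * l - 4 * D * l ^ 2)) := by simp
      _ ≤ _ := le_self_add

theorem lintegral_exp_sq_div_le_of_mgf_le [IsProbabilityMeasure μ] (hg_meas : Measurable g)
    (hg : 0 ≤ g) (hD : 0 < D)
    (hmgf : ∀ l : ℝ, 0 ≤ l →
      ∫⁻ x, ENNReal.ofReal (exp (l * g x)) ∂μ ≤ ENNReal.ofReal (exp (l * m + D * l ^ 2))) :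
    ∫⁻ x, ENNReal.ofReal (exp (g x ^ 2 / (16 * D))) ∂μ ≤ ENNReal.ofReal (3 * exp (m ^ 2 / D)) := by
  set c := √(π / (4 * D))
  have hc : 0 < c := sqrt_pos.2 (by positivity)
  have hgauss : ∀ x, ENNReal.ofReal (exp (g x ^ 2 / (16 * D))) * ENNReal.ofReal c
      = ∫⁻ l, ENNReal.ofReal (exp (g x * l - 4 * D * l ^ 2)) := fun x => by
    rw [lintegral_exp_mul_sub_mul_sq _ (by positivity), ENNReal.ofReal_mul (exp_nonneg _)]
    congr 3
    ring
  have hmeas : Measurable (Function.uncurry fun x (l : ℝ) =>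
      ENNReal.ofReal (exp (g x * l - 4 * D * l ^ 2))) := by
    fun_prop
  have hfinal : c + exp (m ^ 2 / (4 * (3 * D))) * √(π / (3 * D)) ≤ 3 * exp (m ^ 2 / D) * c := by
    have h_exp : exp (m ^ 2 / (4 * (3 * D))) ≤ exp (m ^ 2 / D) := by
      gcongr
      linarith
    have h_one : 1 ≤ exp (m ^ 2 / D) := one_le_exp (by positivity)
    nlinarith [sqrt_pi_div_three_mul_le hD, exp_pos (m ^ 2 / (4 * (3 * D)))]
  rw [← ENNReal.mul_le_mul_iff_left (ofReal_pos.2 hc).ne' ofReal_ne_top]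
  calc (∫⁻ x, ENNReal.ofReal (exp (g x ^ 2 / (16 * D))) ∂μ) * ENNReal.ofReal c
      = ∫⁻ x, (∫⁻ l, ENNReal.ofReal (exp (g x * l - 4 * D * l ^ 2))) ∂μ := by
        rw [← lintegral_mul_const' _ _ ofReal_ne_top]
        exact lintegral_congr hgauss
    _ = ∫⁻ l, (∫⁻ x, ENNReal.ofReal (exp (g x * l - 4 * D * l ^ 2)) ∂μ) :=
        lintegral_lintegral_swap hmeas.aemeasurable
    _ ≤ ∫⁻ l, (ENNReal.ofReal (exp (0 * l - 4 * D * l ^ 2))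
          + ENNReal.ofReal (exp (m * l - 3 * D * l ^ 2))) :=
        lintegral_mono (lintegral_exp_mul_sub_mul_sq_le_of_mgf_le hg hmgf)
    _ = ENNReal.ofReal (c + exp (m ^ 2 / (4 * (3 * D))) * √(π / (3 * D))) := by
        rw [lintegral_add_left (by fun_prop), lintegral_exp_mul_sub_mul_sq _ (by positivity),
          lintegral_exp_mul_sub_mul_sq _ (by positivity), ← ENNReal.ofReal_add (by positivity)
          (by positivity)]
        simp [c]
    _ ≤ ENNReal.ofReal (3 * exp (m ^ 2 / D)) * ENNReal.ofReal c := by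
        rw [← ENNReal.ofReal_mul (by positivity)]
        exact ofReal_le_ofReal hfinal

end MomentGeneratingFunction

/-- A Gaussian concentration bound `∫ e^{f − μ(f)} dμ ≤ e^{D‖f‖²_Lip}` for all Lipschitz `f`
implies a Gaussian moment bound:
`∫ exp(d(x₀,x)²/(16D)) dμ ≤ 3 exp(μ(d)²/D)` for some point `x₀`. -/
theorem gaussianConcentration_to_gaussianMoment
    {E : Type*} [MetricSpace E] [Nonempty E] [MeasurableSpace E] [BorelSpace E]
    (μ : Measure E) [IsProbabilityMeasure μ] (D : ℝ) (hD : 0 < D)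
    (hGCB : ∀ f : E → ℝ, (∃ K : ℝ≥0, LipschitzWith K f) →
      Integrable f μ ∧
        ∫⁻ x, ENNReal.ofReal (Real.exp (f x - ∫ y, f y ∂μ)) ∂μ
          ≤ ENNReal.ofReal (Real.exp (D * lipNorm f ^ 2))) :
    ∃ x₀ : E,
      ∫⁻ x, ENNReal.ofReal (Real.exp (dist x₀ x ^ 2 / (16 * D))) ∂μ
        ≤ ENNReal.ofReal (3 * Real.exp ((∫ x, dist x₀ x ∂μ) ^ 2 / D)) := by
  obtain ⟨x₀⟩ := ‹Nonempty E›
  refine ⟨x₀, lintegral_exp_sq_div_le_of_mgf_le (by fun_prop) (fun x => dist_nonneg) hD ?_⟩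
  intro l hl
  lift l to ℝ≥0 using hl
  have hlip : LipschitzWith l fun x => (l : ℝ) * dist x₀ x := by
    simpa [Function.comp_def] using
      (lipschitzWith_smul (l : ℝ)).comp (LipschitzWith.dist_right x₀)
  simpa only [integral_const_mul] using
    hlip.lintegral_exp_le_of_concentration hD.le (hGCB _ ⟨l, hlip⟩).2
end

section
/- If a probability measure μ on a metric space (E,d) satisfies ∫ exp(a·d(x₀,x)²) dμ(x) ≤ b for some x₀ ∈ E, a > 0, b ≥ 1, then for every Lipschitz f : E → ℝ one has ∫ e^{f − μ(f)} dμ ≤ e^{D‖f‖²_Lip} with D = b²e/(2a√π). -/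
/-!
Write `g = f − f(x₀)`, so that `|g| ≤ L·d(x₀,·)` with `L = ‖f‖_Lip`, and let `X = ∫ e^g`,
`Y = ∫ e^{−g}`. Jensen gives `e^{−μ(g)} ≤ Y`, hence
`∫ e^{f−μ(f)} = e^{−μ(g)} X ≤ XY ≤ (∫ cosh g)²`. It remains to show `∫ cosh g ≤ e^{b²L²/(4a)}`.
If `L² ≤ 2a`, put `θ = L²/(2a) ≤ 1`; then `cosh g ≤ e^{g²/2} ≤ e^{θ a d²} ≤ θ e^{a d²} + 1 − θ`
by convexity, so `∫ cosh g ≤ 1 + θ(b − 1) ≤ e^{θ(b−1)}`. Otherwise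
`cosh g ≤ e^{L d} ≤ e^{L²/(4a)} e^{a d²}` gives `∫ cosh g ≤ b e^{L²/(4a)}`.
Both bounds are at most `e^{b²L²/(4a)}`, and `b²/(2a) ≤ b²e/(2a√π)` since `√π ≤ e`.
-/

open MeasureTheory ENNReal
open scoped Classical NNReal

open Real

lemma LipschitzWith.abs_sub_le_lipNorm_mul {E : Type*} [MetricSpace E] {f : E → ℝ} {K : ℝ≥0}
    (hf : LipschitzWith K f) (x y : E) : |f x - f y| ≤ lipNorm f * dist x y := by
  rcases eq_or_ne x y with rfl | hxy
  · simp
  have hbdd : BddAbove (Set.range fun p : {p : E × E // p.1 ≠ p.2} =>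
      |f (p : E × E).1 - f (p : E × E).2| / dist (p : E × E).1 (p : E × E).2) := by
    refine ⟨K, ?_⟩
    rintro _ ⟨p, rfl⟩
    rw [div_le_iff₀ (dist_pos.2 p.2), ← Real.dist_eq]
    exact hf.dist_le_mul _ _
  rw [← div_le_iff₀ (dist_pos.2 hxy)]
  exact le_ciSup hbdd ⟨(x, y), hxy⟩

lemma sqrt_pi_le_exp_one : √π ≤ exp 1 := by
  refine ((sqrt_lt' (exp_pos 1)).2 ?_).le
  nlinarith [pi_lt_d2, exp_one_gt_d9]

lemma mul_le_sq_div_add_mul_sq {a : ℝ} (ha : 0 < a) (L t : ℝ) :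
    L * t ≤ L ^ 2 / (4 * a) + a * t ^ 2 := by
  have h : L * t - a * t ^ 2 ≤ L ^ 2 / (4 * a) := by
    rw [le_div_iff₀ (by positivity)]
    nlinarith [sq_nonneg (L - 2 * a * t)]
  linarith

lemma exp_abs_le_exp_mul_exp_mul_sq {a L t u : ℝ} (ha : 0 < a) (hu : |u| ≤ L * t) :
    exp |u| ≤ exp (L ^ 2 / (4 * a)) * exp (a * t ^ 2) := by
  rw [← exp_add]
  exact exp_le_exp.2 (hu.trans (mul_le_sq_div_add_mul_sq ha L t))

lemma cosh_le_exp_abs (u : ℝ) : cosh u ≤ exp |u| := by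
  rw [← cosh_abs, cosh_eq]
  linarith [exp_le_exp.2 (neg_le_self (abs_nonneg u))]

lemma cosh_le_mul_exp_add_one_sub {u s θ : ℝ} (hθ₀ : 0 ≤ θ) (hθ₁ : θ ≤ 1)
    (hu : u ^ 2 ≤ 2 * θ * s) : cosh u ≤ θ * exp s + (1 - θ) := by
  have hconv := convexOn_exp.2 (Set.mem_univ s) (Set.mem_univ 0) hθ₀ (sub_nonneg.2 hθ₁)
    (add_sub_cancel θ 1)
  simp only [smul_eq_mul, mul_zero, add_zero, exp_zero, mul_one] at hconv
  calc cosh u ≤ exp (u ^ 2 / 2) := cosh_le_exp_half_sq u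
    _ ≤ exp (θ * s) := exp_le_exp.2 (by linarith)
    _ ≤ θ * exp s + (1 - θ) := hconv

section ProbabilitySpace

variable {Ω : Type*} [MeasurableSpace Ω] {μ : Measure Ω} [IsProbabilityMeasure μ] {g : Ω → ℝ}

lemma integral_exp_sub_integral_le_sq_integral_cosh (hg : Integrable g μ)
    (hpos : Integrable (fun x => exp (g x)) μ) (hneg : Integrable (fun x => exp (-g x)) μ) :
    ∫ x, exp (g x - ∫ y, g y ∂μ) ∂μ ≤ (∫ x, cosh (g x) ∂μ) ^ 2 := by
  set X := ∫ x, exp (g x) ∂μ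
  set Y := ∫ x, exp (-g x) ∂μ
  have jensen : exp (-∫ y, g y ∂μ) ≤ Y := by
    simpa only [Pi.neg_apply, integral_neg] using
      convexOn_exp.map_integral_le continuous_exp.continuousOn isClosed_univ
        (ae_of_all _ fun _ => Set.mem_univ _) hg.neg hneg
  have hcosh : ∫ x, cosh (g x) ∂μ = (X + Y) / 2 := by
    simp only [cosh_eq]
    rw [integral_div, integral_add hpos hneg]
  have hX : 0 ≤ X := integral_nonneg fun _ => (exp_pos _).le
  calc ∫ x, exp (g x - ∫ y, g y ∂μ) ∂μ = exp (-∫ y, g y ∂μ) * X := by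
        rw [← integral_const_mul]
        simp only [← exp_add, neg_add_eq_sub]
    _ ≤ Y * X := mul_le_mul_of_nonneg_right jensen hX
    _ ≤ ((X + Y) / 2) ^ 2 := by nlinarith [sq_nonneg (X - Y)]
    _ = (∫ x, cosh (g x) ∂μ) ^ 2 := by rw [hcosh]

end ProbabilitySpace

section GaussianMoment

variable {Ω : Type*} [MeasurableSpace Ω] {μ : Measure Ω} {g r : Ω → ℝ} {a b L : ℝ}

lemma integrable_exp_abs_of_abs_le_mul (ha : 0 < a)
    (hG : Integrable (fun x => exp (a * r x ^ 2)) μ) (hg : AEStronglyMeasurable g μ)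
    (hgr : ∀ x, |g x| ≤ L * r x) : Integrable (fun x => exp |g x|) μ :=
  (hG.const_mul (exp (L ^ 2 / (4 * a)))).mono'
    ((continuous_exp.comp continuous_abs).comp_aestronglyMeasurable hg)
    (ae_of_all _ fun x => by
      rw [norm_of_nonneg (exp_pos _).le]
      exact exp_abs_le_exp_mul_exp_mul_sq ha (hgr x))

lemma integrable_of_integrable_exp_abs (hg : AEStronglyMeasurable g μ)
    (hE : Integrable (fun x => exp |g x|) μ) : Integrable g μ :=
  hE.mono' hg (ae_of_all _ fun x => by
    rw [norm_eq_abs]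
    linarith [add_one_le_exp |g x|])

lemma integrable_exp_of_integrable_exp_abs (hg : AEStronglyMeasurable g μ)
    (hE : Integrable (fun x => exp |g x|) μ) : Integrable (fun x => exp (g x)) μ :=
  hE.mono' (continuous_exp.comp_aestronglyMeasurable hg) (ae_of_all _ fun x => by
    rw [norm_of_nonneg (exp_pos _).le]
    exact exp_le_exp.2 (le_abs_self _))

lemma integral_cosh_le_mul_exp (ha : 0 < a) (hG : Integrable (fun x => exp (a * r x ^ 2)) μ)
    (hGb : ∫ x, exp (a * r x ^ 2) ∂μ ≤ b) (hgr : ∀ x, |g x| ≤ L * r x) :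
    ∫ x, cosh (g x) ∂μ ≤ b * exp (L ^ 2 / (4 * a)) :=
  calc ∫ x, cosh (g x) ∂μ ≤ ∫ x, exp (L ^ 2 / (4 * a)) * exp (a * r x ^ 2) ∂μ :=
        integral_mono_of_nonneg (ae_of_all _ fun x => (cosh_pos _).le) (hG.const_mul _)
          (ae_of_all _ fun x =>
            (cosh_le_exp_abs _).trans (exp_abs_le_exp_mul_exp_mul_sq ha (hgr x)))
    _ = exp (L ^ 2 / (4 * a)) * ∫ x, exp (a * r x ^ 2) ∂μ := integral_const_mul _ _
    _ ≤ exp (L ^ 2 / (4 * a)) * b := by gcongr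
    _ = b * exp (L ^ 2 / (4 * a)) := mul_comm _ _

variable [IsProbabilityMeasure μ]

lemma integral_cosh_le_exp_mul_of_sq_le (ha : 0 < a)
    (hG : Integrable (fun x => exp (a * r x ^ 2)) μ) (hGb : ∫ x, exp (a * r x ^ 2) ∂μ ≤ b)
    (hgr : ∀ x, |g x| ≤ L * r x) (hL : L ^ 2 ≤ 2 * a) :
    ∫ x, cosh (g x) ∂μ ≤ exp (L ^ 2 / (2 * a) * (b - 1)) := by
  set θ := L ^ 2 / (2 * a)
  have hθ₀ : 0 ≤ θ := by positivity
  have hθ₁ : θ ≤ 1 := (div_le_one (by positivity)).2 hL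
  have hpt : ∀ x, cosh (g x) ≤ θ * exp (a * r x ^ 2) + (1 - θ) := fun x => by
    refine cosh_le_mul_exp_add_one_sub hθ₀ hθ₁ ?_
    have hsq : |g x| ^ 2 ≤ (L * r x) ^ 2 := pow_le_pow_left₀ (abs_nonneg _) (hgr x) 2
    have hθa : 2 * θ * (a * r x ^ 2) = (L * r x) ^ 2 := by
      simp only [θ]
      field_simp
    rw [sq_abs] at hsq
    linarith
  calc ∫ x, cosh (g x) ∂μ ≤ ∫ x, (θ * exp (a * r x ^ 2) + (1 - θ)) ∂μ :=
        integral_mono_of_nonneg (ae_of_all _ fun x => (cosh_pos _).le)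
          ((hG.const_mul θ).add (integrable_const _)) (ae_of_all _ hpt)
    _ = θ * ∫ x, exp (a * r x ^ 2) ∂μ + (1 - θ) := by
        rw [integral_add (hG.const_mul θ) (integrable_const _), integral_const_mul,
          integral_const]
        simp
    _ ≤ θ * b + (1 - θ) := by gcongr
    _ ≤ exp (θ * (b - 1)) := by linarith [add_one_le_exp (θ * (b - 1))]

lemma integral_cosh_le_exp (ha : 0 < a) (hb : 1 ≤ b)
    (hG : Integrable (fun x => exp (a * r x ^ 2)) μ) (hGb : ∫ x, exp (a * r x ^ 2) ∂μ ≤ b)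
    (hgr : ∀ x, |g x| ≤ L * r x) :
    ∫ x, cosh (g x) ∂μ ≤ exp (b ^ 2 * (L ^ 2 / (4 * a))) := by
  rcases le_or_gt (L ^ 2) (2 * a) with hL | hL
  · refine (integral_cosh_le_exp_mul_of_sq_le ha hG hGb hgr hL).trans (exp_le_exp.2 ?_)
    have hhalf : L ^ 2 / (2 * a) = 2 * (L ^ 2 / (4 * a)) := by field_simp; ring
    rw [hhalf]
    have : 0 ≤ L ^ 2 / (4 * a) := by positivity
    nlinarith [sq_nonneg (b - 1)]
  · refine (integral_cosh_le_mul_exp ha hG hGb hgr).trans ?_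
    have hc : 1 / 2 < L ^ 2 / (4 * a) := by
      rw [lt_div_iff₀ (by positivity)]
      linarith
    have hlog : 2 * log b ≤ b ^ 2 - 1 := by
      simpa only [Real.log_pow, Nat.cast_ofNat] using
        log_le_sub_one_of_pos (by positivity : 0 < b ^ 2)
    nth_rewrite 1 [← exp_log (by linarith : 0 < b)]
    rw [← exp_add]
    refine exp_le_exp.2 ?_
    nlinarith [mul_le_mul_of_nonneg_left hc.le (by nlinarith : 0 ≤ b ^ 2 - 1)]

theorem lintegral_exp_sub_integral_le_of_abs_le_mul (ha : 0 < a) (hb : 1 ≤ b)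
    (hG : Integrable (fun x => exp (a * r x ^ 2)) μ) (hGb : ∫ x, exp (a * r x ^ 2) ∂μ ≤ b)
    (hg : AEStronglyMeasurable g μ) (hgr : ∀ x, |g x| ≤ L * r x) :
    ∫⁻ x, ENNReal.ofReal (exp (g x - ∫ y, g y ∂μ)) ∂μ
      ≤ ENNReal.ofReal (exp (b ^ 2 * L ^ 2 / (2 * a))) := by
  have hE := integrable_exp_abs_of_abs_le_mul ha hG hg hgr
  have hpos := integrable_exp_of_integrable_exp_abs hg hE
  have hneg : Integrable (fun x => exp (-g x)) μ :=
    integrable_exp_of_integrable_exp_abs hg.neg (by simpa only [Pi.neg_apply, abs_neg] using hE)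
  have hcentered : Integrable (fun x => exp (g x - ∫ y, g y ∂μ)) μ := by
    simpa only [sub_eq_add_neg, exp_add] using hpos.mul_const (exp (-∫ y, g y ∂μ))
  rw [← ofReal_integral_eq_lintegral_ofReal hcentered (ae_of_all _ fun _ => (exp_pos _).le)]
  refine ENNReal.ofReal_le_ofReal ?_
  calc ∫ x, exp (g x - ∫ y, g y ∂μ) ∂μ ≤ (∫ x, cosh (g x) ∂μ) ^ 2 :=
        integral_exp_sub_integral_le_sq_integral_cosh
          (integrable_of_integrable_exp_abs hg hE) hpos hneg
    _ ≤ exp (b ^ 2 * (L ^ 2 / (4 * a))) ^ 2 :=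
        pow_le_pow_left₀ (integral_nonneg fun _ => (cosh_pos _).le)
          (integral_cosh_le_exp ha hb hG hGb hgr) 2
    _ = exp (b ^ 2 * L ^ 2 / (2 * a)) := by
        rw [sq, ← exp_add]
        congr 1
        field_simp
        ring

end GaussianMoment

/-- A Gaussian moment bound `∫ exp(a·d(x₀,x)²) dμ ≤ b` (with `a > 0`, `b ≥ 1`) implies the
Gaussian concentration bound `∫ e^{f − μ(f)} dμ ≤ e^{D‖f‖²_Lip}` with `D = b²e/(2a√π)`. -/
theorem gaussianMoment_to_gaussianConcentration
    {E : Type*} [MetricSpace E] [MeasurableSpace E] [BorelSpace E]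
    (μ : Measure E) [IsProbabilityMeasure μ] (x₀ : E) (a b : ℝ) (ha : 0 < a) (hb : 1 ≤ b)
    (hmom : ∫⁻ x, ENNReal.ofReal (Real.exp (a * dist x₀ x ^ 2)) ∂μ ≤ ENNReal.ofReal b) :
    ∀ f : E → ℝ, (∃ K : ℝ≥0, LipschitzWith K f) →
      Integrable f μ ∧
        ∫⁻ x, ENNReal.ofReal (Real.exp (f x - ∫ y, f y ∂μ)) ∂μ
          ≤ ENNReal.ofReal
              (Real.exp (b ^ 2 * Real.exp 1 / (2 * a * Real.sqrt Real.pi) * lipNorm f ^ 2)) := by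
  rintro f ⟨K, hf⟩
  have hG₀ : 0 ≤ᵐ[μ] fun x => exp (a * dist x₀ x ^ 2) := ae_of_all _ fun _ => (exp_pos _).le
  have hGm : AEStronglyMeasurable (fun x => exp (a * dist x₀ x ^ 2)) μ := by fun_prop
  have hG : Integrable (fun x => exp (a * dist x₀ x ^ 2)) μ :=
    ⟨hGm, (hasFiniteIntegral_iff_ofReal hG₀).2 (hmom.trans_lt ofReal_lt_top)⟩
  have hGb : ∫ x, exp (a * dist x₀ x ^ 2) ∂μ ≤ b := by
    rw [integral_eq_lintegral_of_nonneg_ae hG₀ hGm]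
    exact toReal_le_of_le_ofReal (by linarith) hmom
  set g := fun x => f x - f x₀
  have hg : AEStronglyMeasurable g μ := (hf.continuous.sub continuous_const).aestronglyMeasurable
  have hgr : ∀ x, |g x| ≤ lipNorm f * dist x₀ x := fun x =>
    dist_comm x x₀ ▸ hf.abs_sub_le_lipNorm_mul x x₀
  have hf_int : Integrable f μ :=
    ((integrable_of_integrable_exp_abs hg (integrable_exp_abs_of_abs_le_mul ha hG hg hgr)).add
      (integrable_const (f x₀))).congr (ae_of_all _ fun x => sub_add_cancel (f x) (f x₀))
  have hcentered : ∀ x, f x - ∫ y, f y ∂μ = g x - ∫ y, g y ∂μ := fun x => by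
    simp [g, integral_sub hf_int (integrable_const _)]
  have hconst : b ^ 2 * lipNorm f ^ 2 / (2 * a)
      ≤ b ^ 2 * exp 1 / (2 * a * √π) * lipNorm f ^ 2 := by
    have hcoef : 0 ≤ 2 * a * b ^ 2 * lipNorm f ^ 2 := by positivity
    rw [div_mul_eq_mul_div, div_le_div_iff₀ (by positivity) (by positivity)]
    nlinarith [mul_le_mul_of_nonneg_left sqrt_pi_le_exp_one hcoef]
  refine ⟨hf_int, ?_⟩
  simp only [hcentered]
  exact (lintegral_exp_sub_integral_le_of_abs_le_mul ha hb hG hGb hg hgr).trans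
    (ofReal_le_ofReal (exp_le_exp.2 hconst))
end

section
/- For every continuously differentiable function v : [0,1] → ℝ with v(0) = v(1) = 0, one has ∫₀¹ v(x)⁴ dx ≤ 4 (∫₀¹ v(x)² dx) (∫₀¹ v′(x)² dx). -/
/-!
Since `v(a) = 0`, the fundamental theorem of calculus gives `v(x)² = ∫ₐˣ 2 v v′ ≤ 2 ∫ₐᵇ |v| |v′|`
for every `x ∈ [a, b]`, and by Cauchy–Schwarz the right-hand side is at most
`2 (∫ v²)^{1/2} (∫ v′²)^{1/2}`. Squaring bounds `v⁴` pointwise by `4 (∫ v²)(∫ v′²)`, and integrating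
over `[a, b]` costs a factor `b - a`.
-/

open MeasureTheory intervalIntegral Set

theorem sq_integral_mul_le_integral_sq_mul_integral_sq {α : Type*} [MeasurableSpace α]
    {μ : Measure α} {f g : α → ℝ} (hf : Integrable (fun x ↦ f x ^ 2) μ)
    (hg : Integrable (fun x ↦ g x ^ 2) μ) (hfg : Integrable (fun x ↦ f x * g x) μ) :
    (∫ x, f x * g x ∂μ) ^ 2 ≤ (∫ x, f x ^ 2 ∂μ) * ∫ x, g x ^ 2 ∂μ := by
  set A := ∫ x, f x ^ 2 ∂μ
  set B := ∫ x, g x ^ 2 ∂μ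
  set I := ∫ x, f x * g x ∂μ
  have quadratic_nonneg (t : ℝ) : 0 ≤ B * (t * t) + 2 * I * t + A := by
    have expand : ∫ x, (f x + t * g x) ^ 2 ∂μ = B * (t * t) + 2 * I * t + A := by
      have pointwise : (fun x ↦ (f x + t * g x) ^ 2) =
          fun x ↦ t * t * g x ^ 2 + 2 * t * (f x * g x) + f x ^ 2 := by
        ext x; ring
      rw [pointwise, integral_add ((hg.const_mul _).fun_add (hfg.const_mul _)) hf,
        integral_add (hg.const_mul _) (hfg.const_mul _), MeasureTheory.integral_const_mul, MeasureTheory.integral_const_mul]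
      ring
    exact expand ▸ integral_nonneg fun x ↦ sq_nonneg _
  have := discrim_le_zero quadratic_nonneg
  rw [discrim] at this
  linarith

theorem sq_le_two_mul_integral_abs_mul_abs_deriv {v : ℝ → ℝ} (hv : ContDiff ℝ 1 v) {a b x : ℝ}
    (ha : v a = 0) (hx : x ∈ Icc a b) :
    v x ^ 2 ≤ 2 * ∫ t in a..b, |v t| * |deriv v t| := by
  have hvc : Continuous v := hv.continuous
  have hdc : Continuous (deriv v) := hv.continuous_deriv le_rfl
  have ftc : ∫ t in a..x, 2 * v t * deriv v t = v x ^ 2 := by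
    have hderiv (t : ℝ) : HasDerivAt (fun y ↦ v y ^ 2) (2 * v t * deriv v t) t := by
      simpa using ((hv.differentiable one_ne_zero t).hasDerivAt).fun_pow 2
    rw [integral_eq_sub_of_hasDerivAt (fun t _ ↦ hderiv t)
      (((continuous_const.mul hvc).mul hdc).intervalIntegrable a x), ha]
    ring
  have habs : Continuous fun t ↦ 2 * (|v t| * |deriv v t|) :=
    continuous_const.mul (hvc.abs.mul hdc.abs)
  calc v x ^ 2 = ∫ t in a..x, 2 * v t * deriv v t := ftc.symm
    _ ≤ ∫ t in a..x, 2 * (|v t| * |deriv v t|) := by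
      refine integral_mono_on hx.1
        (((continuous_const.mul hvc).mul hdc).intervalIntegrable a x)
        (habs.intervalIntegrable a x) fun t _ ↦ ?_
      calc 2 * v t * deriv v t ≤ |2 * v t * deriv v t| := le_abs_self _
        _ = 2 * (|v t| * |deriv v t|) := by rw [abs_mul, abs_mul, abs_two, mul_assoc]
    _ ≤ ∫ t in a..b, 2 * (|v t| * |deriv v t|) :=
      integral_mono_interval le_rfl hx.1 hx.2
        (Filter.Eventually.of_forall fun t ↦ by positivity) (habs.intervalIntegrable a b)
    _ = 2 * ∫ t in a..b, |v t| * |deriv v t| := integral_const_mul _ _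

theorem integral_pow_four_le {v : ℝ → ℝ} (hv : ContDiff ℝ 1 v) {a b : ℝ} (ha : v a = 0)
    (hab : a ≤ b) :
    ∫ x in a..b, v x ^ 4 ≤
      4 * (b - a) * (∫ x in a..b, v x ^ 2) * ∫ x in a..b, deriv v x ^ 2 := by
  have hvc : Continuous v := hv.continuous
  have hdc : Continuous (deriv v) := hv.continuous_deriv le_rfl
  set A := ∫ x in a..b, v x ^ 2
  set B := ∫ x in a..b, deriv v x ^ 2
  set I := ∫ t in a..b, |v t| * |deriv v t|
  have cauchy_schwarz : I ^ 2 ≤ A * B := by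
    simp only [I, A, B, integral_of_le hab, ← sq_abs (v _), ← sq_abs (deriv v _)]
    exact sq_integral_mul_le_integral_sq_mul_integral_sq
      ((hvc.abs.pow 2).integrableOn_Ioc) ((hdc.abs.pow 2).integrableOn_Ioc)
      ((hvc.abs.mul hdc.abs).integrableOn_Ioc)
  have pointwise (x : ℝ) (hx : x ∈ Icc a b) : v x ^ 4 ≤ 4 * (A * B) := by
    have hsq := sq_le_two_mul_integral_abs_mul_abs_deriv hv ha hx
    calc v x ^ 4 = (v x ^ 2) ^ 2 := by ring
      _ ≤ (2 * I) ^ 2 := pow_le_pow_left₀ (sq_nonneg _) hsq 2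
      _ ≤ 4 * (A * B) := by linarith
  calc ∫ x in a..b, v x ^ 4 ≤ ∫ _ in a..b, 4 * (A * B) :=
        integral_mono_on hab ((hvc.pow 4).intervalIntegrable a b) intervalIntegrable_const
          pointwise
    _ = 4 * (b - a) * A * B := by rw [intervalIntegral.integral_const, smul_eq_mul]; ring

theorem l4_interpolation_general (v : ℝ → ℝ) (hv : ContDiff ℝ 1 v) (h0 : v 0 = 0) :
    ∫ x in (0:ℝ)..1, v x ^ 4 ≤
      4 * (∫ x in (0:ℝ)..1, v x ^ 2) * ∫ x in (0:ℝ)..1, deriv v x ^ 2 := by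
  simpa using integral_pow_four_le hv h0 zero_le_one

/-- Ladyzhenskaya-type interpolation inequality on `[0,1]`: for `v ∈ C¹` with
`v(0) = v(1) = 0`, `∫₀¹ v⁴ ≤ 4 (∫₀¹ v²)(∫₀¹ v′²)`. -/
theorem l4_interpolation (v : ℝ → ℝ) (hv : ContDiff ℝ 1 v) (h0 : v 0 = 0) (h1 : v 1 = 0) :
    ∫ x in (0:ℝ)..1, v x ^ 4 ≤
      4 * (∫ x in (0:ℝ)..1, v x ^ 2) * ∫ x in (0:ℝ)..1, deriv v x ^ 2 :=
  l4_interpolation_general v hv h0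
end
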